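/- (Characterisation of uniform ergodicity) Let B be a transition matrix on the finite state space S, let X and Y be two independent copies of the Markov chain with transition matrix B (so (X,Y) is the Markov chain on S×S with transition probabilities P((X_{t+1},Y_{t+1})=(e_i,e_k) | (X_t,Y_t)=(e_j,e_l)) = b_{ij}b_{kl}), and let T := inf{t ≥ 1 : X_t = Y_t} be their first meeting time. The following are equivalent: (i) the chain with transition matrix B is uniformly ergodic; (ii) the chain has exactly one closed communicating class (i.e. is irreducible up to transient states) and is aperiodic; (iii) there exists β > 0 such that sup_{x,y∈S} E_{xy}[e^{βT}] < ∞, where E_{xy} denotes expectation conditional on X_0 = x and Y_0 = y. -/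

import Mathlib

open MeasureTheory Finset
open scoped ENNReal

noncomputable section

namespace DiscreteEBSDE

/-- A column-stochastic transition matrix on a finite state space. -/
def IsTransMat {S : Type*} [Fintype S] (B : Matrix S S ℝ) : Prop :=
  (∀ i j, 0 ≤ B i j) ∧ ∀ j, ∑ i, B i j = 1

/-- A probability vector on a finite state space. -/
def IsProbVec {S : Type*} [Fintype S] (μ : S → ℝ) : Prop :=
  (∀ i, 0 ≤ μ i) ∧ ∑ i, μ i = 1

/-- Total variation distance between measures on a finite state space. -/
def tvDist {S : Type*} [Fintype S] (μ ν : S → ℝ) : ℝ := (∑ x, |μ x - ν x|) / 2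

/-- The chain induced by the column-stochastic matrix `B` is uniformly ergodic:
`B^t μ → π` in total variation, at exponential rate, uniformly in the initial law `μ`. -/
def UniformlyErgodic {S : Type*} [Fintype S] [DecidableEq S] (B : Matrix S S ℝ) : Prop :=
  ∃ π : S → ℝ, IsProbVec π ∧ ∃ R ρ : ℝ, 0 < R ∧ 0 < ρ ∧
    ∀ (t : ℕ) (μ : S → ℝ), IsProbVec μ →
      tvDist ((B ^ t).mulVec μ) π ≤ R * Real.exp (-ρ * t)

/-- `(X, Y)` is (under `μ`) a pair of independent copies of the Markov chain with
column-stochastic transition matrix `B`: the Markov property on path cylinders, with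
product transition probabilities. -/
def IsPairChain {S : Type*} {Ω : Type*} [MeasurableSpace Ω] (B : Matrix S S ℝ)
    (μ : Measure Ω) (X Y : ℕ → Ω → S) : Prop :=
  ∀ (t : ℕ) (w v : ℕ → S) (i k : S),
    μ ({ω | X (t + 1) ω = i ∧ Y (t + 1) ω = k} ∩
        {ω | ∀ s ≤ t, X s ω = w s ∧ Y s ω = v s}) =
      ENNReal.ofReal (B i (w t) * B k (v t)) *
        μ {ω | ∀ s ≤ t, X s ω = w s ∧ Y s ω = v s}

/-- The first meeting time of `X` and `Y` at or after time `t₀`, valued in `ℕ∞`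
(`⊤` if they never meet). -/
def meetTime {S : Type*} {Ω : Type*} (X Y : ℕ → Ω → S) (t₀ : ℕ) (ω : Ω) : ℕ∞ :=
  sInf {n : ℕ∞ | ∃ t : ℕ, n = (t : ℕ∞) ∧ t₀ ≤ t ∧ X t ω = Y t ω}

/-- `e^{β T}` for `T : ℕ∞`, equal to `∞` when `T = ∞`. -/
def expVal (β : ℝ) : ℕ∞ → ℝ≥0∞ :=
  WithTop.recTopCoe ⊤ fun m : ℕ => ENNReal.ofReal (Real.exp (β * m))

/-- `j` leads to `i` for the chain with column-stochastic matrix `B`. -/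
def Leads {S : Type*} [Fintype S] [DecidableEq S] (B : Matrix S S ℝ) (j i : S) : Prop :=
  ∃ n : ℕ, 0 < (B ^ n) i j

/-- Two states communicate if each leads to the other. -/
def Communicates {S : Type*} [Fintype S] [DecidableEq S] (B : Matrix S S ℝ)
    (i j : S) : Prop :=
  Leads B i j ∧ Leads B j i

/-- `C` is a communicating class of the chain `B`. -/
def IsCommClass {S : Type*} [Fintype S] [DecidableEq S] (B : Matrix S S ℝ)
    (C : Set S) : Prop :=
  C.Nonempty ∧ ∀ i ∈ C, ∀ j, j ∈ C ↔ Communicates B i j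

/-- `C` is a closed communicating class of the chain `B`. -/
def IsClosedCommClass {S : Type*} [Fintype S] [DecidableEq S] (B : Matrix S S ℝ)
    (C : Set S) : Prop :=
  IsCommClass B C ∧ ∀ j ∈ C, ∀ i, Leads B j i → i ∈ C

/-- The chain `B` is aperiodic: every state in a closed communicating class has
period `1` (every common divisor of its return times is `1`). -/
def AperiodicChain {S : Type*} [Fintype S] [DecidableEq S] (B : Matrix S S ℝ) : Prop :=
  ∀ i : S, (∃ C : Set S, IsClosedCommClass B C ∧ i ∈ C) →
    ∀ d : ℕ, (∀ n : ℕ, 1 ≤ n → 0 < (B ^ n) i i → d ∣ n) → d = 1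

/-- The Nummelin split matrix `𝓑` on the split space `S × Bool` (second coordinate
`true` is the layer `S₁`): columns from `S₀` follow `C = (1-γ)⁻¹(B - γA)`, columns from
`S₁` follow `A`, and the result is split between the layers with masses `1-γ` and `γ`. -/
def splitMatrix {N : ℕ} (γ : ℝ) (A B : Matrix (Fin N) (Fin N) ℝ) :
    Matrix (Fin N × Bool) (Fin N × Bool) ℝ := fun p q =>
  (if p.2 then γ else 1 - γ) *
    (if q.2 then A p.1 q.1 else (1 - γ)⁻¹ * (B p.1 q.1 - γ * A p.1 q.1))

/-!
Let `K = B ⊗ₖ B` be the transition matrix of the pair `(X, Y)` and `D` the pair chain killed on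
the diagonal, so that `P_p(T > t) = ∑ q, (D ^ t) q p`. Once the copies have met they move
together, so the part `K ^ t - D ^ t` of the pair law that has met has equal marginals; this gives
the coupling inequality `‖B ^ t μ - B ^ t ν‖_TV ≤ sup_p P_p(T > t)`.

(iii) ⇒ (i): by Markov's inequality an exponential moment of `T` makes `P_p(T > t)` decay
exponentially, so `B ^ t e_j` is Cauchy and its limit `π` attracts every `B ^ t μ` at that rate.
(i) ⇒ (ii): the support of `π` is closed, is reached from every state, and its states have
eventually positive return probabilities. (ii) ⇒ (iii): aperiodicity makes the return times of a
state `i₀` of the closed class cofinite (they form a numerical semigroup of gcd `1`); as every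
state leads to `i₀`, some row `(B ^ m) i₀ ·` is positive (Doeblin's condition). Then two copies
are both at `i₀` after `m` steps with probability bounded below, so `P_p(T > t)` decays
geometrically and `e ^ (β T)` is integrable for small `β > 0`.
-/

open Matrix Filter Topology
open scoped Kronecker

section NonnegMatrix

variable {S : Type*} [Fintype S] [DecidableEq S]

lemma pow_add_apply_pos {A : Matrix S S ℝ} (hA : ∀ i j, 0 ≤ A i j) {m n : ℕ} {i k j : S}
    (h₁ : 0 < (A ^ m) i k) (h₂ : 0 < (A ^ n) k j) : 0 < (A ^ (m + n)) i j := by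
  rw [pow_add, mul_apply]
  refine (mul_pos h₁ h₂).trans_le (single_le_sum (f := fun r => (A ^ m) i r * (A ^ n) r j)
    (fun r _ => ?_) (mem_univ k))
  exact mul_nonneg (pow_apply_nonneg hA m i r) (pow_apply_nonneg hA n r j)

lemma pow_apply_le_pow_apply {A A' : Matrix S S ℝ} (hA : ∀ i j, 0 ≤ A i j)
    (hAA' : ∀ i j, A i j ≤ A' i j) (t : ℕ) (i j : S) : (A ^ t) i j ≤ (A' ^ t) i j := by
  induction t generalizing j with
  | zero => rfl
  | succ t ih =>
    rw [pow_succ, pow_succ, mul_apply, mul_apply]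
    gcongr with k
    · exact hA k j
    · exact (pow_apply_nonneg hA t i k).trans (ih k)
    · exact ih k
    · exact hAA' k j

lemma sum_mul_apply_le {ι : Type*} [Fintype ι] {A M : Matrix ι ι ℝ} {c : ℝ}
    (hA : ∀ r, ∑ q, A q r ≤ c) (hM : ∀ q p, 0 ≤ M q p) (p : ι) :
    ∑ q, (A * M) q p ≤ c * ∑ q, M q p := by
  simp only [mul_apply]
  rw [Finset.sum_comm, Finset.mul_sum]
  refine sum_le_sum fun r _ => ?_
  rw [← Finset.sum_mul]
  exact mul_le_mul_of_nonneg_right (hA r) (hM r p)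

lemma kronecker_pow {α : Type*} [CommSemiring α] (A A' : Matrix S S α) (t : ℕ) :
    (A ⊗ₖ A') ^ t = (A ^ t) ⊗ₖ (A' ^ t) := by
  induction t with
  | zero => simp
  | succ t ih => rw [pow_succ, ih, ← mul_kronecker_mul, pow_succ, pow_succ]

lemma kronecker_mem_colStochastic {A A' : Matrix S S ℝ} (hA : A ∈ colStochastic ℝ S)
    (hA' : A' ∈ colStochastic ℝ S) : A ⊗ₖ A' ∈ colStochastic ℝ (S × S) := by
  refine mem_colStochastic_iff_sum.2 ⟨fun q p => mul_nonneg (hA.1 _ _) (hA'.1 _ _), fun p => ?_⟩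
  simp only [kroneckerMap_apply, Fintype.sum_prod_type, ← Finset.sum_mul_sum,
    sum_col_of_mem_colStochastic hA, sum_col_of_mem_colStochastic hA', mul_one]

end NonnegMatrix

section KilledPairMatrix

variable {S : Type*} [DecidableEq S] {B : Matrix S S ℝ}

def diagIndicator : Matrix (S × S) (S × S) ℝ :=
  diagonal fun q => if q.1 = q.2 then 1 else 0

/-- The pair chain `B ⊗ₖ B` killed when the two coordinates meet: `(killedPairMatrix B ^ t) q p`
is the mass of the pair paths from `p` to `q` that avoid the diagonal at times `1, …, t`. -/
def killedPairMatrix (B : Matrix S S ℝ) : Matrix (S × S) (S × S) ℝ :=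
  of fun q p => if q.1 = q.2 then 0 else B q.1 p.1 * B q.2 p.2

lemma killedPairMatrix_nonneg (hB : ∀ i j, 0 ≤ B i j) (q p : S × S) :
    0 ≤ killedPairMatrix B q p := by
  simp only [killedPairMatrix, of_apply]
  split_ifs
  exacts [le_rfl, mul_nonneg (hB _ _) (hB _ _)]

lemma killedPairMatrix_le (hB : ∀ i j, 0 ≤ B i j) (q p : S × S) :
    killedPairMatrix B q p ≤ (B ⊗ₖ B) q p := by
  simp only [killedPairMatrix, of_apply, kroneckerMap_apply]
  split_ifs
  exacts [mul_nonneg (hB _ _) (hB _ _), le_rfl]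

end KilledPairMatrix

section Coupling

variable {S : Type*} [Fintype S]

def fstMarginal : (S × S → ℝ) →ₗ[ℝ] S → ℝ where
  toFun v i := ∑ k, v (i, k)
  map_add' _ _ := by ext; simp [Finset.sum_add_distrib]
  map_smul' _ _ := by ext; simp [Finset.mul_sum]

def sndMarginal : (S × S → ℝ) →ₗ[ℝ] S → ℝ where
  toFun v i := ∑ k, v (k, i)
  map_add' _ _ := by ext; simp [Finset.sum_add_distrib]
  map_smul' _ _ := by ext; simp [Finset.mul_sum]

lemma sum_fstMarginal (v : S × S → ℝ) : ∑ i, fstMarginal v i = ∑ q, v q :=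
  (Fintype.sum_prod_type v).symm

lemma sum_sndMarginal (v : S × S → ℝ) : ∑ i, sndMarginal v i = ∑ q, v q := by
  rw [Fintype.sum_prod_type, Finset.sum_comm]
  rfl

variable [DecidableEq S] {B : Matrix S S ℝ}

def noMeetProb (B : Matrix S S ℝ) (t : ℕ) (p : S × S) : ℝ :=
  ∑ q, (killedPairMatrix B ^ t) q p

lemma fstMarginal_kronecker_mulVec {A A' : Matrix S S ℝ} (hA' : A' ∈ colStochastic ℝ S)
    (v : S × S → ℝ) : fstMarginal ((A ⊗ₖ A') *ᵥ v) = A *ᵥ fstMarginal v := by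
  ext i
  simp only [fstMarginal, LinearMap.coe_mk, AddHom.coe_mk, mulVec, dotProduct,
    Fintype.sum_prod_type, kroneckerMap_apply, Finset.mul_sum]
  rw [Finset.sum_comm]
  refine Finset.sum_congr rfl fun a _ => ?_
  rw [Finset.sum_comm]
  refine Finset.sum_congr rfl fun b _ => ?_
  rw [← Finset.sum_mul, ← Finset.mul_sum, sum_col_of_mem_colStochastic hA', mul_one]

lemma sndMarginal_kronecker_mulVec {A A' : Matrix S S ℝ} (hA : A ∈ colStochastic ℝ S)
    (v : S × S → ℝ) : sndMarginal ((A ⊗ₖ A') *ᵥ v) = A' *ᵥ sndMarginal v := by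
  ext i
  simp only [sndMarginal, LinearMap.coe_mk, AddHom.coe_mk, mulVec, dotProduct,
    Fintype.sum_prod_type, kroneckerMap_apply, Finset.mul_sum]
  rw [Finset.sum_comm, Finset.sum_comm (f := fun b a => A' i b * v (a, b))]
  refine Finset.sum_congr rfl fun a _ => ?_
  rw [Finset.sum_comm]
  refine Finset.sum_congr rfl fun b _ => ?_
  rw [← Finset.sum_mul, ← Finset.sum_mul, sum_col_of_mem_colStochastic hA, one_mul]

lemma fstMarginal_diagIndicator_mulVec (v : S × S → ℝ) :
    fstMarginal (diagIndicator *ᵥ v) = sndMarginal (diagIndicator *ᵥ v) := by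
  ext i
  simp [fstMarginal, sndMarginal, diagIndicator, mulVec_diagonal]

lemma kronecker_sub_killedPairMatrix :
    B ⊗ₖ B - killedPairMatrix B = diagIndicator * (B ⊗ₖ B) := by
  ext q p
  by_cases hq : q.1 = q.2 <;> simp [killedPairMatrix, diagIndicator, hq]

lemma killedPairMatrix_pow_apply_of_eq {t : ℕ} (ht : t ≠ 0) {q : S × S} (hq : q.1 = q.2)
    (p : S × S) : (killedPairMatrix B ^ t) q p = 0 := by
  obtain ⟨s, rfl⟩ := Nat.exists_eq_succ_of_ne_zero ht
  simp [pow_succ', mul_apply, killedPairMatrix, hq]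

lemma fstMarginal_met_eq_sndMarginal_met (hB : B ∈ colStochastic ℝ S) (t : ℕ)
    (v : S × S → ℝ) :
    fstMarginal (((B ⊗ₖ B) ^ t - killedPairMatrix B ^ t) *ᵥ v) =
      sndMarginal (((B ⊗ₖ B) ^ t - killedPairMatrix B ^ t) *ᵥ v) := by
  induction t generalizing v with
  | zero => simp
  | succ t ih =>
    have hstep : (B ⊗ₖ B) ^ (t + 1) - killedPairMatrix B ^ (t + 1) =
        (B ⊗ₖ B) * ((B ⊗ₖ B) ^ t - killedPairMatrix B ^ t) +
          diagIndicator * (B ⊗ₖ B) * killedPairMatrix B ^ t := by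
      rw [← kronecker_sub_killedPairMatrix, pow_succ', pow_succ']
      noncomm_ring
    rw [hstep, add_mulVec, ← mulVec_mulVec, Matrix.mul_assoc, ← mulVec_mulVec, map_add, map_add,
      fstMarginal_kronecker_mulVec hB, sndMarginal_kronecker_mulVec hB, ih,
      fstMarginal_diagIndicator_mulVec]

lemma killedPairMatrix_pow_apply_nonneg (hB : ∀ i j, 0 ≤ B i j) (t : ℕ) (q p : S × S) :
    0 ≤ (killedPairMatrix B ^ t) q p :=
  pow_apply_nonneg (killedPairMatrix_nonneg hB) t q p

lemma sum_mulVec_eq_sum_mul_noMeetProb (t : ℕ) (w : S × S → ℝ) :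
    ∑ q, (killedPairMatrix B ^ t *ᵥ w) q = ∑ p, w p * noMeetProb B t p := by
  simp only [mulVec, dotProduct, noMeetProb, Finset.mul_sum]
  rw [Finset.sum_comm]
  exact Finset.sum_congr rfl fun p _ => Finset.sum_congr rfl fun q _ => mul_comm _ _

lemma sum_abs_pow_mulVec_fstMarginal_sub_le (hB : B ∈ colStochastic ℝ S) (t : ℕ)
    {w : S × S → ℝ} (hw : ∀ p, 0 ≤ w p) :
    ∑ i, |(B ^ t *ᵥ fstMarginal w) i - (B ^ t *ᵥ sndMarginal w) i| ≤
      2 * ∑ p, w p * noMeetProb B t p := by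
  set u := killedPairMatrix B ^ t *ᵥ w
  have hu : ∀ q, 0 ≤ u q := fun q =>
    Finset.sum_nonneg fun p _ => mul_nonneg (killedPairMatrix_pow_apply_nonneg hB.1 t q p) (hw p)
  have hmet := fstMarginal_met_eq_sndMarginal_met hB t w
  rw [sub_mulVec, map_sub, map_sub, kronecker_pow, fstMarginal_kronecker_mulVec (pow_mem hB t),
    sndMarginal_kronecker_mulVec (pow_mem hB t)] at hmet
  have key : ∀ i, (B ^ t *ᵥ fstMarginal w) i - (B ^ t *ᵥ sndMarginal w) i =
      fstMarginal u i - sndMarginal u i := fun i => by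
    have := congrFun hmet i
    simp only [Pi.sub_apply] at this
    linarith
  have hfst : ∀ i, 0 ≤ fstMarginal u i := fun i => Finset.sum_nonneg fun k _ => hu _
  have hsnd : ∀ i, 0 ≤ sndMarginal u i := fun i => Finset.sum_nonneg fun k _ => hu _
  calc ∑ i, |(B ^ t *ᵥ fstMarginal w) i - (B ^ t *ᵥ sndMarginal w) i|
      ≤ ∑ i, (fstMarginal u i + sndMarginal u i) := by
        gcongr with i
        rw [key, abs_sub_le_iff]
        constructor <;> linarith [hfst i, hsnd i]
    _ = 2 * ∑ p, w p * noMeetProb B t p := by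
        rw [Finset.sum_add_distrib, sum_fstMarginal, sum_sndMarginal,
          sum_mulVec_eq_sum_mul_noMeetProb]
        ring

lemma tvDist_pow_mulVec_le (hB : B ∈ colStochastic ℝ S) {t : ℕ} {c : ℝ}
    (hc : ∀ p, noMeetProb B t p ≤ c) {μ ν : S → ℝ} (hμ : IsProbVec μ) (hν : IsProbVec ν) :
    tvDist (B ^ t *ᵥ μ) (B ^ t *ᵥ ν) ≤ c := by
  set w : S × S → ℝ := fun p => μ p.1 * ν p.2
  have hw : ∀ p, 0 ≤ w p := fun p => mul_nonneg (hμ.1 _) (hν.1 _)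
  have hfst : fstMarginal w = μ := by
    ext i
    simp [w, fstMarginal, ← Finset.mul_sum, hν.2]
  have hsnd : sndMarginal w = ν := by
    ext i
    simp [w, sndMarginal, ← Finset.sum_mul, hμ.2]
  have hwsum : ∑ p, w p = 1 := by
    rw [Fintype.sum_prod_type]
    simp [w, ← Finset.mul_sum, hν.2, hμ.2]
  have := sum_abs_pow_mulVec_fstMarginal_sub_le hB t hw
  rw [hfst, hsnd] at this
  calc tvDist (B ^ t *ᵥ μ) (B ^ t *ᵥ ν) ≤ ∑ p, w p * noMeetProb B t p := by
        unfold tvDist; linarith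
    _ ≤ ∑ p, w p * c := Finset.sum_le_sum fun p _ => mul_le_mul_of_nonneg_left (hc p) (hw p)
    _ = c := by rw [← Finset.sum_mul, hwsum, one_mul]

end Coupling

lemma pow_mul_le_pow_of_add_le {u : ℕ → ℝ} {ρ : ℝ} {m : ℕ} (hm : m ≠ 0) (hu : ∀ t, u t ≤ 1)
    (hρ₀ : 0 ≤ ρ) (hρ₁ : ρ ≤ 1) (hstep : ∀ t, u (m + t) ≤ ρ ^ m * u t) (t : ℕ) :
    ρ ^ m * u t ≤ ρ ^ t := by
  induction t using Nat.strong_induction_on with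
  | _ t ih =>
    rcases lt_or_ge t m with htm | htm
    · calc ρ ^ m * u t ≤ ρ ^ m * 1 := by gcongr; exact hu t
        _ ≤ ρ ^ t := by rw [mul_one]; exact pow_le_pow_of_le_one hρ₀ hρ₁ htm.le
    · obtain ⟨s, rfl⟩ := Nat.exists_eq_add_of_le htm
      calc ρ ^ m * u (m + s) ≤ ρ ^ m * (ρ ^ m * u s) := by gcongr; exact hstep s
        _ ≤ ρ ^ m * ρ ^ s := by gcongr; exact ih s (by omega)
        _ = ρ ^ (m + s) := (pow_add ρ m s).symm

section Doeblin

variable {S : Type*} [Fintype S] [DecidableEq S] {B : Matrix S S ℝ}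

lemma noMeetProb_nonneg (hB : ∀ i j, 0 ≤ B i j) (t : ℕ) (p : S × S) :
    0 ≤ noMeetProb B t p :=
  Finset.sum_nonneg fun q _ => killedPairMatrix_pow_apply_nonneg hB t q p

lemma killedPairMatrix_pow_apply_le (hB : ∀ i j, 0 ≤ B i j) (t : ℕ) (q p : S × S) :
    (killedPairMatrix B ^ t) q p ≤ ((B ⊗ₖ B) ^ t) q p :=
  pow_apply_le_pow_apply (killedPairMatrix_nonneg hB) (killedPairMatrix_le hB) t q p

lemma noMeetProb_le_one (hB : B ∈ colStochastic ℝ S) (t : ℕ) (p : S × S) :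
    noMeetProb B t p ≤ 1 := by
  calc noMeetProb B t p ≤ ∑ q, ((B ⊗ₖ B) ^ t) q p :=
        Finset.sum_le_sum fun q _ => killedPairMatrix_pow_apply_le hB.1 t q p
    _ = 1 := sum_col_of_mem_colStochastic (pow_mem (kronecker_mem_colStochastic hB hB) t) p

/-- The copies started at `r` are both at `i₀` at time `t` with probability
`(B ^ t) i₀ r.1 * (B ^ t) i₀ r.2`, and that mass is killed. -/
lemma sum_killedPairMatrix_pow_apply_le (hB : B ∈ colStochastic ℝ S) {t : ℕ} (ht : t ≠ 0)
    (i₀ : S) (r : S × S) :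
    ∑ q, (killedPairMatrix B ^ t) q r ≤ 1 - (B ^ t) i₀ r.1 * (B ^ t) i₀ r.2 := by
  have hK : ((B ⊗ₖ B) ^ t) (i₀, i₀) r = (B ^ t) i₀ r.1 * (B ^ t) i₀ r.2 := by
    rw [kronecker_pow]; rfl
  have hsum := sum_col_of_mem_colStochastic (pow_mem (kronecker_mem_colStochastic hB hB) t) r
  rw [← Finset.add_sum_erase _ _ (mem_univ (i₀, i₀)), hK] at hsum
  rw [← Finset.add_sum_erase _ _ (mem_univ (i₀, i₀)), killedPairMatrix_pow_apply_of_eq ht rfl,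
    zero_add]
  have := Finset.sum_le_sum fun q (_ : q ∈ univ.erase (i₀, i₀)) =>
    killedPairMatrix_pow_apply_le hB.1 t q r
  linarith

lemma noMeetProb_add_le (hB : B ∈ colStochastic ℝ S) {m : ℕ} {c : ℝ}
    (hc : ∀ r, ∑ q, (killedPairMatrix B ^ m) q r ≤ c) (t : ℕ) (p : S × S) :
    noMeetProb B (m + t) p ≤ c * noMeetProb B t p := by
  rw [noMeetProb, pow_add]
  exact sum_mul_apply_le hc (killedPairMatrix_pow_apply_nonneg hB.1 t) p

lemma exists_noMeetProb_le_geometric (hB : B ∈ colStochastic ℝ S) {m : ℕ} (hm : m ≠ 0)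
    {i₀ : S} (hpos : ∀ j, 0 < (B ^ m) i₀ j) :
    ∃ C ρ : ℝ, 0 ≤ C ∧ 0 < ρ ∧ ρ < 1 ∧ ∀ t p, noMeetProb B t p ≤ C * ρ ^ t := by
  have : Nonempty (S × S) := ⟨(i₀, i₀)⟩
  obtain ⟨r₀, hr₀⟩ := Finite.exists_max fun r => ∑ q, (killedPairMatrix B ^ m) q r
  set c := ∑ q, (killedPairMatrix B ^ m) q r₀
  have hc₁ : c < 1 := by
    have := sum_killedPairMatrix_pow_apply_le hB hm i₀ r₀
    nlinarith [mul_pos (hpos r₀.1) (hpos r₀.2)]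
  -- `ρ ^ m` dominates the `m`-step contraction factor `c`, and stays away from `0`.
  set a := max c (1 / 2)
  have ha₀ : 0 < a := lt_max_of_lt_right (by norm_num)
  set ρ := a ^ (m⁻¹ : ℝ)
  have hρm : ρ ^ m = a := Real.rpow_inv_natCast_pow ha₀.le hm
  have hρ₀ : 0 < ρ := Real.rpow_pos_of_pos ha₀ _
  have hρ₁ : ρ < 1 :=
    Real.rpow_lt_one ha₀.le (max_lt hc₁ (by norm_num)) (by positivity)
  refine ⟨(ρ ^ m)⁻¹, ρ, by positivity, hρ₀, hρ₁, fun t p => ?_⟩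
  have hstep : ∀ t, noMeetProb B (m + t) p ≤ ρ ^ m * noMeetProb B t p := fun t =>
    (noMeetProb_add_le hB hr₀ t p).trans <| by
      rw [hρm]; gcongr
      exacts [noMeetProb_nonneg hB.1 t p, le_max_left _ _]
  have := pow_mul_le_pow_of_add_le hm (noMeetProb_le_one hB · p) hρ₀.le hρ₁.le hstep t
  rw [inv_mul_eq_div, le_div_iff₀ (by positivity), mul_comm]
  exact this

end Doeblin

section Classes

variable {S : Type*} [Fintype S] [DecidableEq S] {B : Matrix S S ℝ}

lemma leads_refl (i : S) : Leads B i i := ⟨0, by simp⟩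

lemma Leads.trans (hB : ∀ i j, 0 ≤ B i j) {i j k : S} (hjk : Leads B j k) (hki : Leads B k i) :
    Leads B j i := by
  obtain ⟨m, hm⟩ := hjk
  obtain ⟨n, hn⟩ := hki
  exact ⟨n + m, pow_add_apply_pos hB hn hm⟩

lemma isClosedCommClass_setOf_communicates (hB : ∀ i j, 0 ≤ B i j) {k : S}
    (hk : ∀ i, Leads B k i → Leads B i k) : IsClosedCommClass B {i | Communicates B k i} := by
  refine ⟨⟨⟨k, leads_refl k, leads_refl k⟩, fun i ⟨hki, hik⟩ j => ⟨?_, ?_⟩⟩, ?_⟩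
  · rintro ⟨hkj, hjk⟩
    exact ⟨hik.trans hB hkj, hjk.trans hB hki⟩
  · rintro ⟨hij, hji⟩
    exact ⟨hki.trans hB hij, hji.trans hB hik⟩
  · rintro j ⟨hkj, -⟩ i hji
    have hki := hkj.trans hB hji
    exact ⟨hki, hk i hki⟩

/-- A state whose set of successors is minimal lies in a closed class. -/
lemma exists_leads_isClosedCommClass (hB : ∀ i j, 0 ≤ B i j) (j : S) :
    ∃ k, Leads B j k ∧ IsClosedCommClass B {i | Communicates B k i} := by
  classical
  let succ : S → Finset S := fun a => univ.filter (Leads B a)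
  have hsucc : ∀ {a b}, Leads B a b → succ b ⊆ succ a := fun hab i hi => by
    simp only [succ, Finset.mem_filter, mem_univ, true_and] at hi ⊢
    exact hab.trans hB hi
  obtain ⟨k, hjk, hmin⟩ := (succ j).exists_min_image (fun a => (succ a).card)
    ⟨j, by simp [succ, leads_refl]⟩
  simp only [succ, Finset.mem_filter, mem_univ, true_and] at hjk
  refine ⟨k, hjk, isClosedCommClass_setOf_communicates hB fun i hki => ?_⟩
  have heq : succ i = succ k :=
    Finset.eq_of_subset_of_card_le (hsucc hki) (hmin i (by simpa [succ] using hjk.trans hB hki))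
  have : k ∈ succ i := heq ▸ by simp [succ, leads_refl]
  simpa [succ] using this

lemma isClosedCommClass_of_forall_leads {C : Set S} (hC : C.Nonempty)
    (hto : ∀ j, ∀ i ∈ C, Leads B j i) (hclosed : ∀ j ∈ C, ∀ i, Leads B j i → i ∈ C) :
    IsClosedCommClass B C :=
  ⟨⟨hC, fun i hi j => ⟨fun hj => ⟨hto i j hj, hto j i hi⟩, fun hij => hclosed i hi j hij.1⟩⟩,
    hclosed⟩

lemma IsClosedCommClass.eq_of_forall_leads {C C' : Set S} (hC : IsClosedCommClass B C)
    (hC' : IsClosedCommClass B C') (hto : ∀ j, ∀ i ∈ C, Leads B j i) : C' = C := by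
  obtain ⟨k, hk⟩ := hC.1.1
  obtain ⟨k', hk'⟩ := hC'.1.1
  have hkC' : k ∈ C' := hC'.2 k' hk' k (hto k' k hk)
  ext j
  rw [hC'.1.2 k hkC', hC.1.2 k hk]

lemma forall_leads_of_existsUnique (hB : ∀ i j, 0 ≤ B i j)
    (huniq : ∃! C : Set S, IsClosedCommClass B C) {C : Set S} (hC : IsClosedCommClass B C)
    {i : S} (hi : i ∈ C) (j : S) : Leads B j i := by
  obtain ⟨k, hjk, hk⟩ := exists_leads_isClosedCommClass hB j
  have hkC : k ∈ C := huniq.unique hk hC ▸ ⟨leads_refl k, leads_refl k⟩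
  exact hjk.trans hB ((hC.1.2 k hkC i).1 hi).1

lemma exists_forall_pow_apply_self_pos (hB : ∀ i j, 0 ≤ B i j) {i : S}
    (hper : ∀ d : ℕ, (∀ n, 1 ≤ n → 0 < (B ^ n) i i → d ∣ n) → d = 1) :
    ∃ n₀, ∀ n ≥ n₀, 0 < (B ^ n) i i := by
  let returns : AddSubmonoid ℕ :=
    { carrier := {n | 0 < (B ^ n) i i}
      zero_mem' := by simp
      add_mem' := pow_add_apply_pos hB }
  have hgcd : Nat.setGcd returns = 1 :=
    hper _ fun n _ hn => Nat.setGcd_dvd_of_mem (s := returns) hn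
  obtain ⟨n₀, hn₀⟩ := Nat.exists_mem_closure_of_ge (s := (returns : Set ℕ))
  refine ⟨n₀, fun n hn => ?_⟩
  have := hn₀ n hn (hgcd ▸ one_dvd n)
  rwa [AddSubmonoid.closure_eq] at this

lemma exists_pow_apply_pos (hB : ∀ i j, 0 ≤ B i j) (huniq : ∃! C : Set S, IsClosedCommClass B C)
    (hap : AperiodicChain B) : ∃ m ≠ 0, ∃ i₀, ∀ j, 0 < (B ^ m) i₀ j := by
  obtain ⟨C, hC, -⟩ := id huniq
  obtain ⟨i₀, hi₀⟩ := hC.1.1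
  obtain ⟨n₀, hret⟩ := exists_forall_pow_apply_self_pos hB (hap i₀ ⟨C, hC, hi₀⟩)
  choose len hlen using forall_leads_of_existsUnique hB huniq hC hi₀
  refine ⟨n₀ + 1 + univ.sup len, by omega, i₀, fun j => ?_⟩
  have hj : len j ≤ univ.sup len := Finset.le_sup (mem_univ j)
  have := pow_add_apply_pos hB (hret (n₀ + 1 + univ.sup len - len j) (by omega)) (hlen j)
  rwa [Nat.sub_add_cancel (by omega)] at this

lemma aperiodicChain_of_eventually_pos
    (h : ∀ i, (∃ C, IsClosedCommClass B C ∧ i ∈ C) → ∀ᶠ n in atTop, 0 < (B ^ n) i i) :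
    AperiodicChain B := by
  intro i hi d hd
  obtain ⟨n, hn⟩ := (h i hi).exists_forall_of_atTop
  have h₁ := hd (n + 1) (by omega) (hn _ (by omega))
  have h₂ := hd (n + 2) (by omega) (hn _ (by omega))
  exact Nat.dvd_one.1 ((Nat.dvd_add_right h₁).1 h₂)

end Classes

section TotalVariation

variable {S : Type*} [Fintype S]

lemma abs_sub_le_two_mul_tvDist (u v : S → ℝ) (i : S) : |u i - v i| ≤ 2 * tvDist u v := by
  have := single_le_sum (f := fun k => |u k - v k|) (fun k _ => abs_nonneg _) (mem_univ i)
  unfold tvDist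
  linarith

lemma tvDist_nonneg (u v : S → ℝ) : 0 ≤ tvDist u v := by
  unfold tvDist
  positivity

lemma dist_le_two_mul_tvDist (u v : S → ℝ) : dist u v ≤ 2 * tvDist u v :=
  (dist_pi_le_iff (by linarith [tvDist_nonneg u v])).2 fun i => by
    rw [Real.dist_eq]; exact abs_sub_le_two_mul_tvDist u v i

lemma continuous_tvDist_right (u : S → ℝ) : Continuous (tvDist u) := by
  unfold tvDist
  fun_prop

lemma isClosed_setOf_isProbVec : IsClosed {v : S → ℝ | IsProbVec v} := by
  simp only [IsProbVec, Set.ofPred_and, Set.ofPred_forall]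
  exact (isClosed_iInter fun i => isClosed_le continuous_const (continuous_apply i)).inter
    (isClosed_eq (by fun_prop) continuous_const)

end TotalVariation

section Ergodic

variable {S : Type*} [Fintype S] [DecidableEq S] {B : Matrix S S ℝ}

lemma IsProbVec.mulVec {M : Matrix S S ℝ} (hM : M ∈ colStochastic ℝ S) {v : S → ℝ}
    (hv : IsProbVec v) : IsProbVec (M *ᵥ v) :=
  ⟨nonneg_mulVec_of_mem_colStochastic hM hv.1, (sum_mulVec_of_mem_colStochastic hM).trans hv.2⟩

lemma isProbVec_single (j : S) : IsProbVec (Pi.single j 1 : S → ℝ) :=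
  ⟨fun i => by by_cases h : i = j <;> simp [h], by simp⟩

lemma UniformlyErgodic.exists_tendsto_pow_apply (h : UniformlyErgodic B) :
    ∃ π, IsProbVec π ∧ ∀ i j, Tendsto (fun t => (B ^ t) i j) atTop (𝓝 (π i)) := by
  obtain ⟨π, hπ, R, ρ, -, hρ, hconv⟩ := h
  refine ⟨π, hπ, fun i j => ?_⟩
  have hdecay : Tendsto (fun t : ℕ => 2 * (R * Real.exp (-ρ * t))) atTop (𝓝 0) := by
    simpa using ((Real.tendsto_exp_atBot.comp
      (tendsto_natCast_atTop_atTop.const_mul_atTop_of_neg (show -ρ < 0 by linarith))).const_mul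
        R).const_mul 2
  refine tendsto_iff_dist_tendsto_zero.2 (squeeze_zero (fun _ => dist_nonneg) (fun t => ?_) hdecay)
  have := abs_sub_le_two_mul_tvDist _ _ i |>.trans
    (mul_le_mul_of_nonneg_left (hconv t _ (isProbVec_single j)) zero_le_two)
  simpa [Real.dist_eq, mulVec_single_one] using this

lemma pow_mulVec_eq_of_tendsto {π : S → ℝ} {j : S}
    (hlim : ∀ i, Tendsto (fun t => (B ^ t) i j) atTop (𝓝 (π i))) (n : ℕ) : B ^ n *ᵥ π = π := by
  ext i
  have h : Tendsto (fun t => (B ^ (n + t)) i j) atTop (𝓝 ((B ^ n *ᵥ π) i)) := by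
    simp only [pow_add, mul_apply, mulVec, dotProduct]
    exact tendsto_finsetSum _ fun k _ => (hlim k).const_mul _
  refine tendsto_nhds_unique h ?_
  simpa only [Function.comp_def, add_comm n] using (hlim i).comp (tendsto_add_atTop_nat n)

lemma existsUnique_isClosedCommClass_of_tendsto (hB : ∀ i j, 0 ≤ B i j) {π : S → ℝ}
    (hπ : IsProbVec π) (hlim : ∀ i j, Tendsto (fun t => (B ^ t) i j) atTop (𝓝 (π i))) :
    (∃! C : Set S, IsClosedCommClass B C) ∧ AperiodicChain B := by
  obtain ⟨i₁, hi₁⟩ : ∃ i, 0 < π i := by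
    by_contra! h
    linarith [Finset.sum_nonpos fun i (_ : i ∈ univ) => h i, hπ.2]
  have hto : ∀ j, ∀ i ∈ {i | 0 < π i}, Leads B j i := fun j i hi =>
    ((hlim i j).eventually (eventually_gt_nhds hi)).exists
  have hclosed : ∀ j ∈ {i | 0 < π i}, ∀ i, Leads B j i → i ∈ {i | 0 < π i} := by
    rintro j hj i ⟨n, hn⟩
    show 0 < π i
    rw [← congrFun (pow_mulVec_eq_of_tendsto (hlim · j) n) i]
    exact (mul_pos hn hj).trans_le (single_le_sum (f := fun k => (B ^ n) i k * π k)
      (fun k _ => mul_nonneg (pow_apply_nonneg hB n i k) (hπ.1 k)) (mem_univ j))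
  have hC := isClosedCommClass_of_forall_leads ⟨i₁, hi₁⟩ hto hclosed
  refine ⟨⟨_, hC, fun C' hC' => hC.eq_of_forall_leads hC' hto⟩,
    aperiodicChain_of_eventually_pos fun i ⟨C', hC', hi⟩ => ?_⟩
  rw [hC.eq_of_forall_leads hC' hto] at hi
  exact (hlim i i).eventually (eventually_gt_nhds hi)

lemma uniformlyErgodic_of_tvDist_le (hB : B ∈ colStochastic ℝ S) [Nonempty S] {C ρ : ℝ}
    (hρ : 0 < ρ) (h : ∀ (t : ℕ) (μ ν : S → ℝ), IsProbVec μ → IsProbVec ν →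
      tvDist (B ^ t *ᵥ μ) (B ^ t *ᵥ ν) ≤ C * Real.exp (-ρ * t)) :
    UniformlyErgodic B := by
  obtain ⟨j⟩ := ‹Nonempty S›
  set a : ℕ → S → ℝ := fun t => B ^ t *ᵥ Pi.single j 1
  have ha : ∀ t, IsProbVec (a t) := fun t => (isProbVec_single j).mulVec (pow_mem hB t)
  have hshift : ∀ t u, a (t + u) = B ^ t *ᵥ a u := fun t u => by
    simp only [a, pow_add, mulVec_mulVec]
  have hcauchy : CauchySeq a := by
    refine cauchySeq_of_le_geometric (Real.exp (-ρ)) (2 * C) (Real.exp_lt_one_iff.2 (by linarith))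
      fun t => (dist_le_two_mul_tvDist _ _).trans ?_
    have := h t (a 0) (a 1) (ha 0) (ha 1)
    rw [← hshift, ← hshift, add_zero] at this
    rw [← Real.exp_nat_mul, mul_comm (t : ℝ)]
    linarith
  obtain ⟨π, hπ⟩ := cauchySeq_tendsto_of_complete hcauchy
  refine ⟨π, isClosed_setOf_isProbVec.mem_of_tendsto hπ (Eventually.of_forall ha), |C| + 1, ρ,
    by positivity, hρ, fun t μ hμ => ?_⟩
  have hlim := ((continuous_tvDist_right (B ^ t *ᵥ μ)).tendsto π).comp
    (hπ.comp (tendsto_add_atTop_nat t))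
  calc tvDist (B ^ t *ᵥ μ) π ≤ C * Real.exp (-ρ * t) :=
        le_of_tendsto' hlim fun u => by
          simpa only [Function.comp, add_comm u, hshift] using h t μ (a u) hμ (ha u)
    _ ≤ (|C| + 1) * Real.exp (-ρ * t) := by gcongr; linarith [le_abs_self C]

end Ergodic

section PairChain

variable {S Ω : Type*} {X Y : ℕ → Ω → S}

def pairPath (X Y : ℕ → Ω → S) (t : ℕ) (ω : Ω) : Fin (t + 1) → S × S :=
  fun s => (X s ω, Y s ω)

lemma lt_meetTime_iff {t₀ t : ℕ} {ω : Ω} :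
    (t : ℕ∞) < meetTime X Y t₀ ω ↔ ∀ s, t₀ ≤ s → s ≤ t → X s ω ≠ Y s ω := by
  rw [← ENat.add_one_le_iff (ENat.natCast_ne_top t), meetTime, le_sInf_iff]
  simp only [Set.mem_ofPred_eq, forall_exists_index, and_imp]
  constructor
  · intro h s hs hst heq
    have := h s s rfl hs heq
    norm_cast at this
    omega
  · rintro h _ s rfl hs heq
    by_contra hlt
    have : s < t + 1 := by exact_mod_cast not_le.1 hlt
    exact h s hs (by omega) heq

lemma setOf_lt_meetTime_and_eq (t : ℕ) (q : S × S) :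
    {ω | (t : ℕ∞) < meetTime X Y 1 ω ∧ (X t ω, Y t ω) = q} = pairPath X Y t ⁻¹'
      {u | (∀ s : Fin (t + 1), 1 ≤ (s : ℕ) → (u s).1 ≠ (u s).2) ∧ u (Fin.last t) = q} := by
  ext ω
  simp only [pairPath, lt_meetTime_iff, Set.mem_ofPred_eq, Set.mem_preimage, Fin.forall_iff,
    Fin.last, and_congr_left_iff]
  exact fun _ => forall_congr' fun s =>
    ⟨fun h hs h₁ => h h₁ (by omega), fun h h₁ hs => h (by omega) h₁⟩

lemma setOf_lt_meetTime_succ_and_eq {t : ℕ} {q : S × S} (hq : q.1 ≠ q.2) :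
    {ω | ((t + 1 : ℕ) : ℕ∞) < meetTime X Y 1 ω ∧ (X (t + 1) ω, Y (t + 1) ω) = q} =
      ⋃ r, {ω | (X (t + 1) ω, Y (t + 1) ω) = q} ∩
        {ω | (t : ℕ∞) < meetTime X Y 1 ω ∧ (X t ω, Y t ω) = r} := by
  ext ω
  simp only [Set.mem_ofPred_eq, Set.mem_iUnion, Set.mem_inter_iff, lt_meetTime_iff,
    Nat.le_add_one_iff, or_imp, forall_and]
  constructor
  · rintro ⟨⟨hmeet, -⟩, hω⟩
    exact ⟨_, hω, hmeet, rfl⟩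
  · rintro ⟨r, hω, hmeet, -⟩
    refine ⟨⟨hmeet, fun _ _ hs heq => hq ?_⟩, hω⟩
    subst hs
    exact (congrArg Prod.fst hω).symm.trans (heq.trans (congrArg Prod.snd hω))

lemma one_le_meetTime (ω : Ω) : 1 ≤ meetTime X Y 1 ω :=
  Order.one_le_iff_pos.2 <| by
    exact_mod_cast (lt_meetTime_iff (X := X) (Y := Y) (t := 0)).2 (by omega)

lemma setOf_lt_meetTime_eq_iUnion (t : ℕ) : {ω | (t : ℕ∞) < meetTime X Y 1 ω} =
    ⋃ q, {ω | (t : ℕ∞) < meetTime X Y 1 ω ∧ (X t ω, Y t ω) = q} := by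
  ext ω
  simp

variable [MeasurableSpace Ω]

lemma measurableSet_pair_eq (hX : ∀ t i, MeasurableSet {ω | X t ω = i})
    (hY : ∀ t i, MeasurableSet {ω | Y t ω = i}) (t : ℕ) (q : S × S) :
    MeasurableSet {ω | (X t ω, Y t ω) = q} := by
  simp only [Prod.ext_iff]
  exact (hX t q.1).inter (hY t q.2)

variable [Fintype S]

lemma measurableSet_pairPath_preimage (hX : ∀ t i, MeasurableSet {ω | X t ω = i})
    (hY : ∀ t i, MeasurableSet {ω | Y t ω = i}) (t : ℕ) (P : Set (Fin (t + 1) → S × S)) :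
    MeasurableSet (pairPath X Y t ⁻¹' P) := by
  rw [← Set.biUnion_preimage_singleton]
  refine .biUnion P.to_countable fun u _ => ?_
  have : pairPath X Y t ⁻¹' {u} =
      ⋂ s : Fin (t + 1), {ω | X s ω = (u s).1} ∩ {ω | Y s ω = (u s).2} := by
    ext ω
    simp [pairPath, funext_iff, Prod.ext_iff, forall_and]
  rw [this]
  exact .iInter fun s => (hX _ _).inter (hY _ _)

variable {B : Matrix S S ℝ} {μ : Measure Ω}

/-- The Markov property of the pair chain, for events determined by the path up to time `t`
and ending at `r`. -/
lemma IsPairChain.measure_inter_pairPath_preimage (h : IsPairChain B μ X Y)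
    (hX : ∀ t i, MeasurableSet {ω | X t ω = i}) (hY : ∀ t i, MeasurableSet {ω | Y t ω = i})
    {t : ℕ} {r : S × S} {P : Set (Fin (t + 1) → S × S)} (hP : ∀ u ∈ P, u (Fin.last t) = r)
    (q : S × S) :
    μ ({ω | (X (t + 1) ω, Y (t + 1) ω) = q} ∩ pairPath X Y t ⁻¹' P) =
      ENNReal.ofReal (B q.1 r.1 * B q.2 r.2) * μ (pairPath X Y t ⁻¹' P) := by
  classical
  have hcyl : ∀ u ∈ P, μ (pairPath X Y t ⁻¹' {u} ∩ {ω | (X (t + 1) ω, Y (t + 1) ω) = q}) =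
      ENNReal.ofReal (B q.1 r.1 * B q.2 r.2) * μ (pairPath X Y t ⁻¹' {u}) := by
    intro u hu
    let w : ℕ → S × S := fun s => u ⟨min s t, by omega⟩
    have hpath :
        pairPath X Y t ⁻¹' {u} = {ω | ∀ s ≤ t, X s ω = (w s).1 ∧ Y s ω = (w s).2} := by
      ext ω
      simp only [pairPath, Set.mem_preimage, Set.mem_singleton_iff, funext_iff, Prod.ext_iff,
        Fin.forall_iff, Nat.lt_succ_iff, Set.mem_ofPred_eq, w]
      exact forall₂_congr fun s hs => by simp [min_eq_left hs]
    have hwt : w t = r := by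
      rw [← hP u hu]
      simp [w, Fin.last]
    rw [Set.inter_comm, hpath, ← hwt, ← h t (fun s => (w s).1) (fun s => (w s).2)]
    simp [Prod.ext_iff]
  let F := univ.filter (· ∈ P)
  have hF : P = F := by ext; simp [F]
  have hmeas : ∀ u ∈ F, MeasurableSet (pairPath X Y t ⁻¹' {u}) := fun u _ =>
    measurableSet_pairPath_preimage hX hY t _
  rw [hF, Set.inter_comm, ← Measure.restrict_apply (measurableSet_pairPath_preimage hX hY t _),
    ← sum_measure_preimage_singleton F hmeas, ← sum_measure_preimage_singleton F hmeas,
    Finset.mul_sum]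
  refine Finset.sum_congr rfl fun u hu => ?_
  rw [Measure.restrict_apply (hmeas u hu), hcyl u (by simpa [F] using hu)]

lemma measurableSet_lt_meetTime_and_eq (hX : ∀ t i, MeasurableSet {ω | X t ω = i})
    (hY : ∀ t i, MeasurableSet {ω | Y t ω = i}) (t : ℕ) (q : S × S) :
    MeasurableSet {ω | (t : ℕ∞) < meetTime X Y 1 ω ∧ (X t ω, Y t ω) = q} := by
  rw [setOf_lt_meetTime_and_eq]
  exact measurableSet_pairPath_preimage hX hY t _

lemma measurableSet_lt_meetTime (hX : ∀ t i, MeasurableSet {ω | X t ω = i})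
    (hY : ∀ t i, MeasurableSet {ω | Y t ω = i}) (t : ℕ) :
    MeasurableSet {ω | (t : ℕ∞) < meetTime X Y 1 ω} := by
  rw [setOf_lt_meetTime_eq_iUnion]
  exact .iUnion (measurableSet_lt_meetTime_and_eq hX hY t)

variable [DecidableEq S]

lemma IsPairChain.measure_lt_meetTime_and_eq (h : IsPairChain B μ X Y) [IsProbabilityMeasure μ]
    (hB : ∀ i j, 0 ≤ B i j) (hX : ∀ t i, MeasurableSet {ω | X t ω = i})
    (hY : ∀ t i, MeasurableSet {ω | Y t ω = i}) {p : S × S}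
    (hstart : μ {ω | X 0 ω = p.1 ∧ Y 0 ω = p.2} = 1) (t : ℕ) (q : S × S) :
    μ {ω | (t : ℕ∞) < meetTime X Y 1 ω ∧ (X t ω, Y t ω) = q} =
      ENNReal.ofReal ((killedPairMatrix B ^ t) q p) := by
  induction t generalizing q with
  | zero =>
    have h0 : ∀ ω, ((0 : ℕ) : ℕ∞) < meetTime X Y 1 ω := fun ω => lt_meetTime_iff.2 (by omega)
    have hstart' : μ {ω | (X 0 ω, Y 0 ω) = p} = 1 := by simpa [Prod.ext_iff] using hstart
    simp only [h0, true_and, pow_zero]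
    by_cases hqp : q = p
    · rw [hqp, hstart', one_apply_eq, ENNReal.ofReal_one]
    · rw [one_apply_ne hqp, ENNReal.ofReal_zero]
      exact measure_mono_null (fun ω (hq : _ = q) (hp : _ = p) => hqp (hq.symm.trans hp))
        ((prob_compl_eq_zero_iff (measurableSet_pair_eq hX hY 0 p)).2 hstart')
  | succ t ih =>
    by_cases hq : q.1 = q.2
    · rw [killedPairMatrix_pow_apply_of_eq t.succ_ne_zero hq, ENNReal.ofReal_zero]
      refine measure_mono_null (fun ω ⟨hlt, hω⟩ => ?_) measure_empty
      refine lt_meetTime_iff.1 hlt (t + 1) (by omega) le_rfl ?_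
      exact (congrArg Prod.fst hω).trans (hq.trans (congrArg Prod.snd hω).symm)
    rw [setOf_lt_meetTime_succ_and_eq hq, measure_iUnion ?_ fun r =>
      (measurableSet_pair_eq hX hY _ q).inter (measurableSet_lt_meetTime_and_eq hX hY t r),
      tsum_fintype]
    · have hterm : ∀ r, μ ({ω | (X (t + 1) ω, Y (t + 1) ω) = q} ∩
          {ω | (t : ℕ∞) < meetTime X Y 1 ω ∧ (X t ω, Y t ω) = r}) =
            ENNReal.ofReal (killedPairMatrix B q r * (killedPairMatrix B ^ t) r p) := fun r => by
        rw [setOf_lt_meetTime_and_eq, h.measure_inter_pairPath_preimage hX hY (fun u hu => hu.2),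
          ← setOf_lt_meetTime_and_eq, ih, ← ENNReal.ofReal_mul (mul_nonneg (hB _ _) (hB _ _))]
        simp [killedPairMatrix, hq]
      rw [Finset.sum_congr rfl fun r _ => hterm r, ← ENNReal.ofReal_sum_of_nonneg fun r _ =>
        mul_nonneg (killedPairMatrix_nonneg hB q r) (killedPairMatrix_pow_apply_nonneg hB t r p),
        pow_succ', mul_apply]
    · exact fun r r' hne => Set.disjoint_left.2 fun ω h₁ h₂ => hne (h₁.2.2.symm.trans h₂.2.2)

lemma IsPairChain.measure_lt_meetTime (h : IsPairChain B μ X Y) [IsProbabilityMeasure μ]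
    (hB : ∀ i j, 0 ≤ B i j) (hX : ∀ t i, MeasurableSet {ω | X t ω = i})
    (hY : ∀ t i, MeasurableSet {ω | Y t ω = i}) {p : S × S}
    (hstart : μ {ω | X 0 ω = p.1 ∧ Y 0 ω = p.2} = 1) (t : ℕ) :
    μ {ω | (t : ℕ∞) < meetTime X Y 1 ω} = ENNReal.ofReal (noMeetProb B t p) := by
  rw [setOf_lt_meetTime_eq_iUnion, measure_iUnion (fun q q' hne => Set.disjoint_left.2
      fun ω h₁ h₂ => hne (h₁.2.symm.trans h₂.2)) (measurableSet_lt_meetTime_and_eq hX hY t),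
    tsum_fintype, noMeetProb,
    ENNReal.ofReal_sum_of_nonneg fun q _ => killedPairMatrix_pow_apply_nonneg hB t q p]
  exact Finset.sum_congr rfl fun q _ => h.measure_lt_meetTime_and_eq hB hX hY hstart t q

end PairChain

section ExpMoment

lemma expVal_natCast (β : ℝ) (n : ℕ) : expVal β n = ENNReal.ofReal (Real.exp (β * n)) := rfl

lemma expVal_top (β : ℝ) : expVal β ⊤ = ⊤ := rfl

lemma expVal_mono {β : ℝ} (hβ : 0 ≤ β) : Monotone (expVal β) := by
  intro a b hab
  cases b with
  | top => exact (expVal_top β).symm ▸ le_top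
  | coe n =>
    cases a with
    | top => exact absurd hab (by simp)
    | coe m =>
      rw [expVal_natCast, expVal_natCast]
      gcongr
      exact_mod_cast hab

lemma exists_pos_exp_mul_lt_one {ρ : ℝ} (hρ₀ : 0 < ρ) (hρ₁ : ρ < 1) :
    ∃ β > 0, Real.exp β * ρ < 1 := by
  have hlog := Real.log_neg hρ₀ hρ₁
  refine ⟨-Real.log ρ / 2, by linarith, ?_⟩
  nth_rewrite 2 [← Real.exp_log hρ₀]
  rw [← Real.exp_add, Real.exp_lt_one_iff]
  linarith

variable {Ω : Type*} {T : Ω → ℕ∞} {β : ℝ}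

lemma indicator_le_expVal (hβ : 0 ≤ β) (t : ℕ) (ω : Ω) :
    {ω | (t : ℕ∞) < T ω}.indicator (fun _ => ENNReal.ofReal (Real.exp (β * (t + 1)))) ω ≤
      expVal β (T ω) := by
  by_cases h : (t : ℕ∞) < T ω
  · rw [Set.indicator_of_mem (show ω ∈ {ω | (t : ℕ∞) < T ω} from h)]
    calc ENNReal.ofReal (Real.exp (β * (t + 1))) = expVal β ((t + 1 : ℕ) : ℕ∞) := by
          rw [expVal_natCast]; push_cast; rfl
      _ ≤ expVal β (T ω) := expVal_mono hβ (by
          rw [Nat.cast_succ]; exact (ENat.add_one_le_iff (ENat.natCast_ne_top t)).2 h)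
  · rw [Set.indicator_of_notMem (show ω ∉ {ω | (t : ℕ∞) < T ω} from h)]
    exact zero_le

lemma expVal_le_tsum_indicator (hβ : 0 ≤ β) {ω : Ω} (hT : 1 ≤ T ω) :
    expVal β (T ω) ≤ ∑' t : ℕ,
      {ω | (t : ℕ∞) < T ω}.indicator (fun _ => ENNReal.ofReal (Real.exp (β * (t + 1)))) ω := by
  cases h : T ω with
  | top =>
    rw [expVal_top, top_le_iff, ← top_le_iff,
      ← ENNReal.tsum_const_eq_top_of_ne_zero (α := ℕ) one_ne_zero]
    refine ENNReal.tsum_le_tsum fun t => ?_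
    rw [Set.indicator_of_mem (by simp [h])]
    exact ENNReal.one_le_ofReal.2 (Real.one_le_exp (by positivity))
  | coe n =>
    obtain ⟨k, rfl⟩ := Nat.exists_eq_add_one.2 (show 0 < n by exact_mod_cast h ▸ hT)
    refine le_trans ?_ (ENNReal.le_tsum k)
    rw [Set.indicator_of_mem (show ω ∈ {ω | (k : ℕ∞) < T ω} by
      rw [Set.mem_ofPred_eq, h]; exact_mod_cast k.lt_succ_self), expVal_natCast]
    push_cast
    rfl

variable [MeasurableSpace Ω] {ν : Measure Ω}

lemma ofReal_exp_mul_measure_le_lintegral_expVal (hβ : 0 ≤ β) {t : ℕ}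
    (hmeas : MeasurableSet {ω | (t : ℕ∞) < T ω}) :
    ENNReal.ofReal (Real.exp (β * (t + 1))) * ν {ω | (t : ℕ∞) < T ω} ≤
      ∫⁻ ω, expVal β (T ω) ∂ν := by
  rw [← lintegral_indicator_const hmeas]
  exact lintegral_mono (indicator_le_expVal hβ t)

lemma measure_lt_le_of_lintegral_expVal_le (hβ : 0 ≤ β) {t : ℕ}
    (hmeas : MeasurableSet {ω | (t : ℕ∞) < T ω}) {a : ℝ} (ha : 0 ≤ a)
    (h : ∫⁻ ω, expVal β (T ω) ∂ν ≤ ENNReal.ofReal a) :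
    ν {ω | (t : ℕ∞) < T ω} ≤ ENNReal.ofReal (a * Real.exp (-β * t)) := by
  have hM := (ofReal_exp_mul_measure_le_lintegral_expVal hβ hmeas).trans h
  calc ν {ω | (t : ℕ∞) < T ω}
      = ENNReal.ofReal (Real.exp (-(β * (t + 1)))) *
          (ENNReal.ofReal (Real.exp (β * (t + 1))) * ν {ω | (t : ℕ∞) < T ω}) := by
        rw [← mul_assoc, ← ENNReal.ofReal_mul (Real.exp_pos _).le, ← Real.exp_add,
          neg_add_cancel, Real.exp_zero, ENNReal.ofReal_one, one_mul]
    _ ≤ ENNReal.ofReal (Real.exp (-(β * (t + 1)))) * ENNReal.ofReal a := by gcongr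
    _ = ENNReal.ofReal (a * Real.exp (-(β * (t + 1)))) := by
        rw [← ENNReal.ofReal_mul (Real.exp_pos _).le, mul_comm]
    _ ≤ ENNReal.ofReal (a * Real.exp (-β * t)) := by
        gcongr
        nlinarith

lemma lintegral_expVal_le (hT : ∀ ω, 1 ≤ T ω)
    (hmeas : ∀ t : ℕ, MeasurableSet {ω | (t : ℕ∞) < T ω}) (hβ : 0 ≤ β) {C ρ : ℝ} (hC : 0 ≤ C)
    (hρ : 0 ≤ ρ) (hβρ : Real.exp β * ρ < 1)
    (htail : ∀ t : ℕ, ν {ω | (t : ℕ∞) < T ω} ≤ ENNReal.ofReal (C * ρ ^ t)) :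
    ∫⁻ ω, expVal β (T ω) ∂ν ≤ ENNReal.ofReal (Real.exp β * C * (1 - Real.exp β * ρ)⁻¹) := by
  calc ∫⁻ ω, expVal β (T ω) ∂ν
      ≤ ∫⁻ ω, ∑' t : ℕ,
          {ω | (t : ℕ∞) < T ω}.indicator (fun _ => ENNReal.ofReal (Real.exp (β * (t + 1)))) ω ∂ν :=
        lintegral_mono fun ω => expVal_le_tsum_indicator hβ (hT ω)
    _ = ∑' t : ℕ, ENNReal.ofReal (Real.exp (β * (t + 1))) * ν {ω | (t : ℕ∞) < T ω} := by
        rw [lintegral_tsum fun t => (measurable_const.indicator (hmeas t)).aemeasurable]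
        exact tsum_congr fun t => lintegral_indicator_const (hmeas t) _
    _ ≤ ∑' t : ℕ, ENNReal.ofReal (Real.exp β * C * (Real.exp β * ρ) ^ t) := by
        refine ENNReal.tsum_le_tsum fun t => (mul_le_mul_right (htail t) _).trans_eq ?_
        rw [← ENNReal.ofReal_mul (Real.exp_pos _).le, mul_pow, ← Real.exp_nat_mul,
          show β * (t + 1) = t * β + β by ring, Real.exp_add]
        ring_nf
    _ = ENNReal.ofReal (Real.exp β * C * (1 - Real.exp β * ρ)⁻¹) := by
        rw [← ENNReal.ofReal_tsum_of_nonneg (fun t => by positivity)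
          ((summable_geometric_of_lt_one (by positivity) hβρ).mul_left _), tsum_mul_left,
          tsum_geometric_of_lt_one (by positivity) hβρ]

end ExpMoment

/-- **Characterisation of uniform ergodicity** for a finite-state chain `B`:
uniform ergodicity ⟺ a unique closed communicating class and aperiodicity ⟺ the
first meeting time of two independent copies has finite exponential moments,
uniformly in the starting states. -/
theorem uniformly_ergodic_tfae {N : ℕ} (hN : 0 < N)
    (B : Matrix (Fin N) (Fin N) ℝ) (hB : IsTransMat B)
    {Ω : Type*} [MeasurableSpace Ω]
    (μ : Fin N → Fin N → Measure Ω) (hμ : ∀ x y, IsProbabilityMeasure (μ x y))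
    (X Y : ℕ → Ω → Fin N)
    (hXmeas : ∀ (t : ℕ) (i : Fin N), MeasurableSet {ω | X t ω = i})
    (hYmeas : ∀ (t : ℕ) (i : Fin N), MeasurableSet {ω | Y t ω = i})
    (hstart : ∀ x y, μ x y {ω | X 0 ω = x ∧ Y 0 ω = y} = 1)
    (hchain : ∀ x y, IsPairChain B (μ x y) X Y) :
    List.TFAE
      [UniformlyErgodic B,
        (∃! C : Set (Fin N), IsClosedCommClass B C) ∧ AperiodicChain B,
        ∃ β : ℝ, 0 < β ∧
          (⨆ x : Fin N, ⨆ y : Fin N,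
            ∫⁻ ω, expVal β (meetTime X Y 1 ω) ∂(μ x y)) < ⊤] := by
  have hB' : B ∈ colStochastic ℝ (Fin N) := mem_colStochastic_iff_sum.2 hB
  have hT : ∀ x y (t : ℕ), μ x y {ω | (t : ℕ∞) < meetTime X Y 1 ω} =
      ENNReal.ofReal (noMeetProb B t (x, y)) := fun x y =>
    have := hμ x y
    (hchain x y).measure_lt_meetTime hB.1 hXmeas hYmeas (hstart x y)
  tfae_have 1 → 2 := fun h =>
    have ⟨_, hπ, hlim⟩ := h.exists_tendsto_pow_apply
    existsUnique_isClosedCommClass_of_tendsto hB.1 hπ hlim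
  tfae_have 2 → 3 := by
    rintro ⟨huniq, hap⟩
    obtain ⟨m, hm, i₀, hpos⟩ := exists_pow_apply_pos hB.1 huniq hap
    obtain ⟨K, ρ, hK, hρ₀, hρ₁, hdecay⟩ := exists_noMeetProb_le_geometric hB' hm hpos
    obtain ⟨β, hβ, hβρ⟩ := exists_pos_exp_mul_lt_one hρ₀ hρ₁
    refine ⟨β, hβ, (iSup₂_le fun x y => lintegral_expVal_le one_le_meetTime
      (measurableSet_lt_meetTime hXmeas hYmeas) hβ.le hK hρ₀.le hβρ fun t =>
        (hT x y t).trans_le (ENNReal.ofReal_le_ofReal (hdecay t _))).trans_lt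
      ENNReal.ofReal_lt_top⟩
  tfae_have 3 → 1 := by
    rintro ⟨β, hβ, hfin⟩
    have : Nonempty (Fin N) := ⟨⟨0, hN⟩⟩
    set E := ⨆ x : Fin N, ⨆ y : Fin N, ∫⁻ ω, expVal β (meetTime X Y 1 ω) ∂(μ x y)
    refine uniformlyErgodic_of_tvDist_le hB' (C := E.toReal) hβ fun t μ₀ ν₀ hμ₀ hν₀ =>
      tvDist_pow_mulVec_le hB' (fun p => ?_) hμ₀ hν₀
    have hp : ∫⁻ ω, expVal β (meetTime X Y 1 ω) ∂(μ p.1 p.2) ≤ ENNReal.ofReal E.toReal :=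
      (le_iSup₂ (f := fun x y => ∫⁻ ω, expVal β (meetTime X Y 1 ω) ∂(μ x y)) p.1 p.2).trans
        (ENNReal.ofReal_toReal hfin.ne).ge
    have := measure_lt_le_of_lintegral_expVal_le hβ.le
      (measurableSet_lt_meetTime hXmeas hYmeas t) ENNReal.toReal_nonneg hp
    rw [hT] at this
    exact (ENNReal.ofReal_le_ofReal_iff (by positivity)).1 this
  tfae_finish
end DiscreteEBSDE
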